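/- arXiv:1304.2215 — 2 statements merged into one kernel-verified Lean document; each statement's English description precedes it below -/
import Mathlib

section
/- Let T be a Pultr template and suppose that the central Pultr functor Γ_T admits a right adjoint, i.e., a map Ω assigning a graph to each graph such that for all graphs G and K there exists a homomorphism of Γ_T(G) to K if and only if there exists a homomorphism of G to Ω(K). Then for every multiplicative graph K, the graph Ω(K) is multiplicative. -/
/-- A graph: a vertex set together with a symmetric adjacency relation (loops allowed). -/
structure SymGraph where
  V : Type
  Adj : V → V → Prop
  symm : ∀ ⦃u v⦄, Adj u v → Adj v u

/-- The categorial product of two graphs. -/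
def SymGraph.tensor (G H : SymGraph) : SymGraph where
  V := G.V × H.V
  Adj p q := G.Adj p.1 q.1 ∧ H.Adj p.2 q.2
  symm := fun p q h => ⟨G.symm h.1, H.symm h.2⟩

/-- A graph `K` is multiplicative if whenever a product `G × H` admits a homomorphism to
`K`, one of the factors `G` or `H` admits a homomorphism to `K`. -/
def GraphMultiplicative (K : SymGraph) : Prop :=
  ∀ G H : SymGraph, Nonempty ((G.tensor H).Adj →r K.Adj) →
    Nonempty (G.Adj →r K.Adj) ∨ Nonempty (H.Adj →r K.Adj)

/-- A Pultr template: graphs `P`, `Q` and homomorphisms `ε₁, ε₂ : P → Q` such that `Q`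
admits an automorphism `q` with `q ∘ ε₁ = ε₂` and `q ∘ ε₂ = ε₁`. -/
structure PultrTemplate where
  P : SymGraph
  Q : SymGraph
  e1 : P.Adj →r Q.Adj
  e2 : P.Adj →r Q.Adj
  q : Q.V → Q.V
  q_bij : Function.Bijective q
  q_adj : ∀ u v, Q.Adj u v ↔ Q.Adj (q u) (q v)
  q_e1 : ∀ p, q (e1 p) = e2 p
  q_e2 : ∀ p, q (e2 p) = e1 p

/-- The central Pultr functor `Γ_T`: vertices of `Γ_T(K)` are the homomorphisms
`g : P → K`, with `g₁ ~ g₂` iff there is a homomorphism `h : Q → K` with `g₁ = h ∘ ε₁`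
and `g₂ = h ∘ ε₂`. -/
def Gamma (T : PultrTemplate) (K : SymGraph) : SymGraph where
  V := T.P.Adj →r K.Adj
  Adj g1 g2 := ∃ h : T.Q.Adj →r K.Adj, (∀ p, h (T.e1 p) = g1 p) ∧ (∀ p, h (T.e2 p) = g2 p)
  symm := by
    rintro g1 g2 ⟨h, h1, h2⟩
    refine ⟨⟨fun x => h (T.q x), fun hab => h.map_rel ((T.q_adj _ _).mp hab)⟩, ?_, ?_⟩
    · intro p
      show h (T.q (T.e1 p)) = g2 p
      rw [T.q_e1 p]; exact h2 p
    · intro p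
      show h (T.q (T.e2 p)) = g1 p
      rw [T.q_e2 p]; exact h1 p

/-!
Pairing gives a homomorphism `Γ_T(G) × Γ_T(H) → Γ_T(G × H)`. So a homomorphism
`G × H → Ω(K)` transposes to `Γ_T(G × H) → K` and hence yields `Γ_T(G) × Γ_T(H) → K`;
multiplicativity of `K` gives `Γ_T(G) → K` or `Γ_T(H) → K`, which transposes back to
`G → Ω(K)` or `H → Ω(K)`.
-/

def SymGraph.tensorLift {A G H : SymGraph} (f : A.Adj →r G.Adj) (g : A.Adj →r H.Adj) :
    A.Adj →r (G.tensor H).Adj where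
  toFun x := (f x, g x)
  map_rel' hxy := ⟨f.map_rel hxy, g.map_rel hxy⟩

def Gamma.tensorHom (T : PultrTemplate) (G H : SymGraph) :
    ((Gamma T G).tensor (Gamma T H)).Adj →r (Gamma T (G.tensor H)).Adj where
  toFun g := SymGraph.tensorLift g.1 g.2
  map_rel' := by
    rintro _ _ ⟨⟨h, h₁, h₂⟩, ⟨h', h₁', h₂'⟩⟩
    exact ⟨SymGraph.tensorLift h h', fun p => Prod.ext (h₁ p) (h₁' p),
      fun p => Prod.ext (h₂ p) (h₂' p)⟩

/-- If the central Pultr functor `Γ_T` admits a right adjoint `Ω`, then for every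
multiplicative graph `K`, the graph `Ω(K)` is multiplicative. -/
theorem right_adjoint_preserves_multiplicative (T : PultrTemplate) (Ω : SymGraph → SymGraph)
    (hΩ : ∀ G K : SymGraph,
      Nonempty ((Gamma T G).Adj →r K.Adj) ↔ Nonempty (G.Adj →r (Ω K).Adj))
    (K : SymGraph) (hK : GraphMultiplicative K) :
    GraphMultiplicative (Ω K) := by
  intro G H hGH
  obtain ⟨c⟩ := (hΩ (G.tensor H) K).mpr hGH
  exact (hK _ _ ⟨c.comp (Gamma.tensorHom T G H)⟩).imp (hΩ G K).mp (hΩ H K).mp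
end

section
/- Let s, r, s', r' be odd positive integers with s/r ≤ s'/r'. Then for every graph G, there exists a homomorphism of P^s_r(G) to P^{s'}_{r'}(G), and there exists a homomorphism of R^{r'}_{s'}(G) to R^r_s(G). -/
/-- `Γ_m(G)`: the graph on the vertex set of `G` in which `u ~ v` iff `G` contains a walk
of length exactly `m` from `u` to `v`. -/
def GammaM (m : ℕ) (G : SymGraph) : SymGraph where
  V := G.V
  Adj u v := ∃ w : ℕ → G.V, w 0 = u ∧ w m = v ∧ ∀ i < m, G.Adj (w i) (w (i + 1))
  symm := by
    rintro u v ⟨w, h0, hm, hw⟩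
    refine ⟨fun i => w (m - i), by simpa using hm, by simpa using h0, ?_⟩
    intro i hi
    have h1 : m - i - 1 + 1 = m - i := by omega
    have h2 : m - (i + 1) = m - i - 1 := by omega
    have := hw (m - i - 1) (by omega)
    rw [h1] at this
    simp only [h2]
    exact G.symm this

/-- Two sets of vertices are completely joined if every vertex of one is adjacent to every
vertex of the other. -/
def CJ (H : SymGraph) (A B : Set H.V) : Prop := ∀ a ∈ A, ∀ b ∈ B, H.Adj a b

/-- The extended tuple `(U₀, U₁, …, U_k)` with `U₀ = {u}`. -/
def extT (H : SymGraph) (u : H.V) {k : ℕ} (U : Fin k → Set H.V) : Fin (k + 1) → Set H.V :=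
  Fin.cases {u} U

/-- The vertices of `Ω_{2k+1}(H)`: the `(k+1)`-tuples `(u, U₁, …, U_k)` with `u ∈ V(H)`,
`U₁` a subset of the neighbourhood of `u` in `H`, and each `U_i` completely joined to
`U_{i-1}` for `i = 2, …, k`. -/
def OmegaVert (H : SymGraph) (k : ℕ) : Type :=
  {p : H.V × (Fin k → Set H.V) //
    ∀ i : Fin k, CJ H (extT H p.1 p.2 i.castSucc) (extT H p.1 p.2 i.succ)}

/-- `Ω_{2k+1}(H)`: two tuples `(u, U₁, …, U_k)` and `(v, V₁, …, V_k)` are adjacent iff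
`u ∈ V₁`, `v ∈ U₁`, `U_{i-1} ⊆ V_i` and `V_{i-1} ⊆ U_i` for `i = 2, …, k`, and `U_k` is
completely joined to `V_k` (with the convention `U₀ = {u}`, `V₀ = {v}`). -/
def OmegaM (k : ℕ) (H : SymGraph) : SymGraph where
  V := OmegaVert H k
  Adj p q :=
    (∀ i : Fin k, extT H p.1.1 p.1.2 i.castSucc ⊆ extT H q.1.1 q.1.2 i.succ ∧
                  extT H q.1.1 q.1.2 i.castSucc ⊆ extT H p.1.1 p.1.2 i.succ) ∧
    CJ H (extT H p.1.1 p.1.2 (Fin.last k)) (extT H q.1.1 q.1.2 (Fin.last k))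
  symm := by
    rintro p q ⟨h1, h2⟩
    exact ⟨fun i => ⟨(h1 i).2, (h1 i).1⟩, fun a ha b hb => H.symm (h2 b hb a ha)⟩

/-- Vertices of the `r`-subdivision, before identification: the original vertices,
together with, for each ordered pair `(u,v)` forming an edge and each `i ∈ {0, …, r}`,
the `i`-th vertex of the path of length `r` replacing the edge, directed from `u` to `v`. -/
def SubVert (r : ℕ) (G : SymGraph) : Type :=
  G.V ⊕ {p : G.V × G.V // G.Adj p.1 p.2} × Fin (r + 1)

/-- The identifications defining the `r`-subdivision: the `0`-th vertex of the path for
`(u,v)` is `u` itself, and the path for `(v,u)` is the reversal of the path for `(u,v)`. -/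
inductive SubRel (r : ℕ) (G : SymGraph) : SubVert r G → SubVert r G → Prop
  | glue (u v : G.V) (h : G.Adj u v) :
      SubRel r G (Sum.inl u) (Sum.inr (⟨(u, v), h⟩, 0))
  | flip (u v : G.V) (h : G.Adj u v) (i : Fin (r + 1)) :
      SubRel r G (Sum.inr (⟨(u, v), h⟩, i))
        (Sum.inr (⟨(v, u), G.symm h⟩, ⟨r - i.val, by omega⟩))

/-- Adjacency before identification: consecutive vertices on the same path. -/
def subPreAdj (r : ℕ) (G : SymGraph) : SubVert r G → SubVert r G → Prop
  | Sum.inr a, Sum.inr b => a.1 = b.1 ∧ (b.2.val = a.2.val + 1 ∨ a.2.val = b.2.val + 1)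
  | _, _ => False

/-- `Λ_r(G)`: the `r`-subdivision of `G`, obtained by replacing each edge of `G` with a
path of `r` edges. -/
def LambdaR (r : ℕ) (G : SymGraph) : SymGraph where
  V := Quot (SubRel r G)
  Adj X Y := ∃ a b, Quot.mk _ a = X ∧ Quot.mk _ b = Y ∧ subPreAdj r G a b
  symm := by
    rintro X Y ⟨a, b, ha, hb, hab⟩
    refine ⟨b, a, hb, ha, ?_⟩
    match a, b, hab with
    | Sum.inr a, Sum.inr b, ⟨h1, h2⟩ => exact ⟨h1.symm, h2.symm⟩

/-- `P^s_r(G) = Γ_s(Λ_r(G))`. -/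
def PF (s r : ℕ) (G : SymGraph) : SymGraph := GammaM s (LambdaR r G)

/-- `R^r_s(H) = Γ_r(Ω_s(H))`, where `s = 2k+1`. -/
def RF (r k : ℕ) (H : SymGraph) : SymGraph := GammaM r (OmegaM k H)

/-!
All maps are built from three kinds of homomorphisms.

* Walks compose and can be padded by a back-and-forth step: a homomorphism `K → Γ_c K'`
  induces `Γ_a K → Γ_{ac} K'`, one `Γ_c K → K'` induces `Γ_{ac} K → Γ_a K'`, and `Γ_m → Γ_n`
  whenever `1 ≤ m ≤ n` have the same parity.
* Stretching every path `c`-fold gives `Λ_b G → Γ_c Λ_{cb} G`. Conversely, for odd `c`, send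
  position `i` of a path of `Λ_{cb} G` to position `⌊i/c⌋ + (i mod c mod 2)` of the same path of
  `Λ_b G`: the end of a walk of length `c ≤ cb` lies on the path of its start, or on a path
  sharing an end vertex with it, close enough that its image is adjacent to the start's image.
* `Ω_{2k+1}` is right adjoint to `Γ_{2k+1}`: a homomorphism `f : Γ_{2k+1} A → H` transposes to
  `a ↦ (f a, f N₁(a), …, f N_k(a))`, `N_j(a)` being the set of ends of `j`-walks from `a`; the
  counit `Γ_{2k+1} Ω_{2k+1} H → H` is the first coordinate.

Hence `P^s_r → Γ_{sr'} Λ_{r'r} → Γ_{s'r} Λ_{r'r} → P^{s'}_{r'}`. With `2K+1 = ss'`, transposing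
`Γ_{s's} Λ_s Ω_{s'} H → Γ_{s'} Ω_{s'} H → H` gives `Ω_{s'} H → Γ_s Ω_{2K+1} H`, transposing
`Γ_s Γ_{s'} Ω_{2K+1} H → Γ_{ss'} Ω_{2K+1} H → H` gives `Γ_{s'} Ω_{2K+1} H → Ω_s H`, and so
`R^{r'}_{s'} → Γ_{r's} Ω_{2K+1} → Γ_{rs'} Ω_{2K+1} → R^r_s`.
-/

abbrev HasWalk (G : SymGraph) (n : ℕ) : G.V → G.V → Prop := (GammaM n G).Adj

namespace HasWalk

variable {G H : SymGraph} {m n : ℕ} {u v x : G.V}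

theorem refl (u : G.V) : HasWalk G 0 u u :=
  ⟨fun _ => u, rfl, rfl, fun _ h => absurd h (Nat.not_lt_zero _)⟩

theorem zero_iff : HasWalk G 0 u v ↔ u = v := by
  refine ⟨?_, fun h => h ▸ refl u⟩
  rintro ⟨w, rfl, rfl, -⟩
  rfl

theorem succ_iff : HasWalk G (n + 1) u x ↔ ∃ v, HasWalk G n u v ∧ G.Adj v x := by
  constructor
  · rintro ⟨w, h0, h1, hw⟩
    exact ⟨w n, ⟨w, h0, rfl, fun i hi => hw i (by omega)⟩, h1 ▸ hw n (by omega)⟩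
  · rintro ⟨v, ⟨w, h0, h1, hw⟩, hvx⟩
    refine ⟨fun i => if i ≤ n then w i else x, by simpa using h0, by simp, fun i hi => ?_⟩
    rcases Nat.lt_or_ge i n with hin | hin
    · simpa [hin.le, (by omega : i + 1 ≤ n)] using hw i hin
    · obtain rfl : i = n := by omega
      simpa [h1] using hvx

theorem of_adj (h : G.Adj u v) : HasWalk G 1 u v := succ_iff.2 ⟨u, refl u, h⟩

theorem adj (h : HasWalk G 1 u v) : G.Adj u v := by
  obtain ⟨y, hy, h⟩ := succ_iff.1 h
  rwa [zero_iff.1 hy]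

theorem symm (h : HasWalk G n u v) : HasWalk G n v u := (GammaM n G).symm h

theorem append (h₁ : HasWalk G m u v) (h₂ : HasWalk G n v x) : HasWalk G (m + n) u x := by
  induction n generalizing x with
  | zero => rwa [← zero_iff.1 h₂]
  | succ n ih =>
    obtain ⟨y, hy, hyx⟩ := succ_iff.1 h₂
    exact succ_iff.2 ⟨y, ih hy, hyx⟩

theorem exists_split (h : HasWalk G (m + n) u x) : ∃ v, HasWalk G m u v ∧ HasWalk G n v x := by
  induction n generalizing x with
  | zero => exact ⟨x, h, refl x⟩
  | succ n ih =>
    obtain ⟨y, hy, hyx⟩ := succ_iff.1 h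
    obtain ⟨v, huv, hvy⟩ := ih hy
    exact ⟨v, huv, succ_iff.2 ⟨y, hvy, hyx⟩⟩

theorem map (f : G.Adj →r H.Adj) (h : HasWalk G n u v) : HasWalk H n (f u) (f v) := by
  obtain ⟨w, rfl, rfl, hw⟩ := h
  exact ⟨fun i => f (w i), rfl, rfl, fun i hi => f.map_rel (hw i hi)⟩

theorem add_two (hn : 1 ≤ n) (h : HasWalk G n u v) : HasWalk G (n + 2) u v := by
  obtain ⟨n, rfl⟩ : ∃ n', n = n' + 1 := ⟨n - 1, by omega⟩
  obtain ⟨y, -, hyv⟩ := succ_iff.1 h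
  exact h.append (succ_iff.2 ⟨y, of_adj (G.symm hyv), hyv⟩)

theorem of_le (hm : 1 ≤ m) (hle : m ≤ n) (hpar : m % 2 = n % 2) (h : HasWalk G m u v) :
    HasWalk G n u v := by
  obtain ⟨j, rfl⟩ : ∃ j, n = m + 2 * j := ⟨(n - m) / 2, by omega⟩
  clear hle hpar
  induction j with
  | zero => exact h
  | succ j ih =>
    have := ih.add_two (by omega)
    rwa [show m + 2 * j + 2 = m + 2 * (j + 1) by ring] at this

theorem map_mul {K : SymGraph} {a c : ℕ} (f : G.Adj →r (GammaM c K).Adj)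
    (h : HasWalk G a u v) : HasWalk K (a * c) (f u) (f v) := by
  induction a generalizing v with
  | zero => simpa [zero_iff.1 h] using refl (G := K) (f v)
  | succ a ih =>
    obtain ⟨y, huy, hyv⟩ := succ_iff.1 h
    rw [Nat.succ_mul]
    exact (ih huy).append (f.map_rel hyv)

theorem map_div {K : SymGraph} {a c : ℕ} (f : (GammaM c G).Adj →r K.Adj)
    (h : HasWalk G (a * c) u v) : HasWalk K a (f u) (f v) := by
  induction a generalizing v with
  | zero =>
    rw [zero_iff.1 (show HasWalk G 0 u v by simpa using h)]
    exact refl _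
  | succ a ih =>
    rw [Nat.succ_mul] at h
    obtain ⟨y, huy, hyv⟩ := exists_split h
    exact succ_iff.2 ⟨f y, ih huy, f.map_rel hyv⟩

end HasWalk

namespace GammaM

variable {K K' : SymGraph} {c m n : ℕ}

def map (f : K.Adj →r K'.Adj) : (GammaM m K).Adj →r (GammaM m K').Adj := ⟨f, HasWalk.map f⟩

def mulHom (a : ℕ) (f : K.Adj →r (GammaM c K').Adj) :
    (GammaM a K).Adj →r (GammaM (a * c) K').Adj :=
  ⟨f, HasWalk.map_mul f⟩

def divHom (a : ℕ) (f : (GammaM c K).Adj →r K'.Adj) :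
    (GammaM (a * c) K).Adj →r (GammaM a K').Adj :=
  ⟨f, HasWalk.map_div f⟩

def ofLE (hm : 1 ≤ m) (hle : m ≤ n) (hpar : m % 2 = n % 2) :
    (GammaM m K).Adj →r (GammaM n K).Adj :=
  ⟨id, HasWalk.of_le hm hle hpar⟩

end GammaM

def contractPos (c i : ℕ) : ℕ := i / c + i % c % 2

theorem contractPos_mul_add {c q t : ℕ} (ht : t < c) : contractPos c (c * q + t) = q + t % 2 := by
  rw [contractPos, Nat.mul_add_div (by omega), Nat.mul_add_mod, Nat.div_eq_of_lt ht,
    Nat.mod_eq_of_lt ht, add_zero]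

theorem contractPos_le {b c i : ℕ} (hc : 0 < c) (h : i ≤ c * b) : contractPos c i ≤ b := by
  obtain ⟨q, t, ht, rfl⟩ : ∃ q t, t < c ∧ i = c * q + t :=
    ⟨i / c, i % c, Nat.mod_lt _ hc, (Nat.div_add_mod i c).symm⟩
  rw [contractPos_mul_add ht]
  rcases Nat.eq_zero_or_pos t with rfl | ht0
  · have := Nat.le_of_mul_le_mul_left (by omega : c * q ≤ c * b) hc
    omega
  · have := Nat.lt_of_mul_lt_mul_left (by omega : c * q < c * b)
    omega

theorem contractPos_sub {b c i : ℕ} (hc : Odd c) (h : i ≤ c * b) :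
    contractPos c (c * b - i) = b - contractPos c i := by
  obtain ⟨q, t, ht, rfl⟩ : ∃ q t, t < c ∧ i = c * q + t :=
    ⟨i / c, i % c, Nat.mod_lt _ hc.pos, (Nat.div_add_mod i c).symm⟩
  rw [contractPos_mul_add ht]
  rcases Nat.eq_zero_or_pos t with rfl | ht0
  · rw [add_zero, ← Nat.mul_sub, ← add_zero (c * (b - q)), contractPos_mul_add hc.pos]
    rfl
  · have := Nat.lt_of_mul_lt_mul_left (by omega : c * q < c * b)
    obtain ⟨d, rfl⟩ : ∃ d, b = q + 1 + d := ⟨b - q - 1, by omega⟩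
    rw [show c * (q + 1 + d) - (c * q + t) = c * d + (c - t) by rw [mul_add, mul_add]; omega,
      contractPos_mul_add (by omega)]
    have := Nat.odd_iff.1 hc
    omega

theorem contractPos_mod_two {c : ℕ} (hc : Odd c) (i : ℕ) : contractPos c i % 2 = i % 2 := by
  obtain ⟨q, t, ht, rfl⟩ : ∃ q t, t < c ∧ i = c * q + t :=
    ⟨i / c, i % c, Nat.mod_lt _ hc.pos, (Nat.div_add_mod i c).symm⟩
  rw [contractPos_mul_add ht]
  obtain ⟨d, rfl⟩ := hc
  rw [show (2 * d + 1) * q + t = 2 * (d * q) + q + t by ring]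
  omega

theorem contractPos_of_le {c i : ℕ} (hc : Odd c) (h : i ≤ c) : contractPos c i = i % 2 := by
  rcases h.eq_or_lt with rfl | h
  · simp [contractPos, Nat.div_self hc.pos, Nat.odd_iff.1 hc]
  · rw [contractPos, Nat.div_eq_of_lt h, Nat.mod_eq_of_lt h, zero_add]

theorem contractPos_adj {c i j : ℕ} (hc : Odd c) (hij : i ≤ j + c) (hji : j ≤ i + c)
    (hpar : (i + j + c) % 2 = 0) :
    contractPos c j = contractPos c i + 1 ∨ contractPos c i = contractPos c j + 1 := by
  have hi := (Nat.div_le_div_right hij).trans_eq (Nat.add_div_right j hc.pos)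
  have hj := (Nat.div_le_div_right hji).trans_eq (Nat.add_div_right i hc.pos)
  have hi2 := contractPos_mod_two hc i
  have hj2 := contractPos_mod_two hc j
  have := Nat.odd_iff.1 hc
  unfold contractPos at *
  omega

namespace SymGraph

abbrev Dart (G : SymGraph) : Type := {p : G.V × G.V // G.Adj p.1 p.2}

def Dart.symm {G : SymGraph} (e : G.Dart) : G.Dart := ⟨(e.1.2, e.1.1), G.symm e.2⟩

end SymGraph

namespace LambdaR

variable {G : SymGraph} {N : ℕ}

def vert (u : G.V) : (LambdaR N G).V := Quot.mk _ (Sum.inl u)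

def pt (e : G.Dart) (i : ℕ) (hi : i ≤ N) : (LambdaR N G).V :=
  Quot.mk _ (Sum.inr (e, ⟨i, Nat.lt_succ_of_le hi⟩))

theorem pt_congr (e : G.Dart) {i j : ℕ} (hi : i ≤ N) (hj : j ≤ N) (h : i = j) :
    pt e i hi = pt e j hj := by
  subst h; rfl

theorem pt_symm (e : G.Dart) (i : ℕ) (hi : i ≤ N) :
    pt e i hi = pt e.symm (N - i) (Nat.sub_le N i) :=
  Quot.sound (SubRel.flip e.1.1 e.1.2 e.2 _)

theorem pt_zero (e : G.Dart) : pt e 0 (Nat.zero_le N) = vert e.1.1 :=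
  (Quot.sound (SubRel.glue _ _ e.2)).symm

theorem pt_last (e : G.Dart) : pt e N le_rfl = vert e.1.2 := by
  rw [pt_symm, pt_congr _ _ (Nat.zero_le N) (Nat.sub_self N), pt_zero]
  rfl

theorem adj_pt (e : G.Dart) {i j : ℕ} (hi : i ≤ N) (hj : j ≤ N) (h : j = i + 1 ∨ i = j + 1) :
    (LambdaR N G).Adj (pt e i hi) (pt e j hj) :=
  ⟨_, _, rfl, rfl, rfl, h⟩

theorem exists_pt_of_adj {X Y : (LambdaR N G).V} (h : (LambdaR N G).Adj X Y) :
    ∃ (e : G.Dart) (i j : ℕ) (hi : i ≤ N) (hj : j ≤ N),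
      X = pt e i hi ∧ Y = pt e j hj ∧ (j = i + 1 ∨ i = j + 1) := by
  obtain ⟨a, b, rfl, rfl, hab⟩ := h
  match a, b, hab with
  | Sum.inr (e, i), Sum.inr (f, j), ⟨hef, hij⟩ =>
    obtain rfl : e = f := hef
    exact ⟨e, i, j, Nat.le_of_lt_succ i.2, Nat.le_of_lt_succ j.2, rfl, rfl, hij⟩

theorem hasWalk_pt (e : G.Dart) {i j d : ℕ} (hi : i ≤ N) (hj : j ≤ N) (h : i + d = j) :
    HasWalk (LambdaR N G) d (pt e i hi) (pt e j hj) := by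
  induction d generalizing j with
  | zero => exact pt_congr e hi hj h ▸ HasWalk.refl _
  | succ d ih =>
    exact (ih (by omega) rfl).append (HasWalk.of_adj (adj_pt e _ hj (by omega)))

def unit (N : ℕ) (G : SymGraph) : G.Adj →r (GammaM N (LambdaR N G)).Adj where
  toFun := vert
  map_rel' {u v} h := by
    simpa only [pt_zero, pt_last] using
      hasWalk_pt (⟨(u, v), h⟩ : G.Dart) (Nat.zero_le N) le_rfl (zero_add N)

/-- A canonical form of the vertices of `Λ_N G`: an original vertex, or, for an inner
point of a path, its two descriptions (one per orientation of the edge). -/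
def normalForm (N : ℕ) (G : SymGraph) : SubVert N G → G.V ⊕ Set (G.Dart × ℕ)
  | Sum.inl u => Sum.inl u
  | Sum.inr (e, i) =>
    if i.val = 0 then Sum.inl e.1.1 else if i.val = N then Sum.inl e.1.2
    else Sum.inr {(e, i.val), (SymGraph.Dart.symm e, N - i.val)}

theorem normalForm_eq_of_subRel (hN : 0 < N) {a b : SubVert N G} (h : SubRel N G a b) :
    normalForm N G a = normalForm N G b := by
  rcases h with ⟨u, v, h⟩ | ⟨u, v, h, i⟩
  · simp [normalForm]
  · have := i.2
    simp only [normalForm]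
    split_ifs <;> first | omega | rfl | skip
    rw [Nat.sub_sub_self (by omega), Set.pair_comm]
    rfl

def normal (hN : 0 < N) : (LambdaR N G).V → G.V ⊕ Set (G.Dart × ℕ) :=
  Quot.lift (normalForm N G) fun _ _ => normalForm_eq_of_subRel hN

theorem vert_eq_pt (hN : 0 < N) {u : G.V} {g : G.Dart} {q : ℕ} {hq : q ≤ N}
    (h : vert u = pt g q hq) : (q = 0 ∧ g.1.1 = u) ∨ (q = N ∧ g.1.2 = u) := by
  have := congrArg (normal hN) h
  simp only [normal, vert, pt, normalForm] at this
  split_ifs at this <;> simp_all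

theorem pt_eq_pt_of_pos_of_lt {f g : G.Dart} {j q : ℕ} {hj : j ≤ N} {hq : q ≤ N}
    (h0 : 0 < j) (hjN : j < N) (h : pt f j hj = pt g q hq) :
    (f = g ∧ j = q) ∨ (f = g.symm ∧ j + q = N) := by
  have := congrArg (normal (by omega)) h
  simp only [normal, pt, normalForm] at this
  split_ifs at this <;> try omega
  have hmem : (f, j) ∈ ({(g, q), (g.symm, N - q)} : Set (G.Dart × ℕ)) :=
    Sum.inr_injective this ▸ Set.mem_insert _ _
  simp only [Set.mem_insert_iff, Set.mem_singleton_iff, Prod.mk.injEq] at hmem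
  rcases hmem with ⟨rfl, rfl⟩ | ⟨rfl, rfl⟩
  · exact Or.inl ⟨rfl, rfl⟩
  · exact Or.inr ⟨rfl, by omega⟩

theorem exists_eq_pt_one_of_adj_vert (hN : 0 < N) {u : G.V} {z : (LambdaR N G).V}
    (h : (LambdaR N G).Adj (vert u) z) : ∃ g : G.Dart, g.1.1 = u ∧ z = pt g 1 hN := by
  obtain ⟨g, q, q', hq, hq', hu, rfl, hqq⟩ := exists_pt_of_adj h
  rcases vert_eq_pt hN hu with ⟨rfl, hg⟩ | ⟨rfl, hg⟩
  · exact ⟨g, hg, pt_congr g _ _ (by omega)⟩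
  · exact ⟨g.symm, hg, (pt_symm g q' hq').trans (pt_congr _ _ _ (by omega))⟩

theorem exists_eq_pt_of_adj_pt {f : G.Dart} {j : ℕ} {hj : j ≤ N} (h0 : 0 < j) (hjN : j < N)
    {z : (LambdaR N G).V} (h : (LambdaR N G).Adj (pt f j hj) z) :
    ∃ (j' : ℕ) (hj' : j' ≤ N), z = pt f j' hj' ∧ (j' = j + 1 ∨ j = j' + 1) := by
  obtain ⟨g, q, q', hq, hq', hfg, rfl, hqq⟩ := exists_pt_of_adj h
  rcases pt_eq_pt_of_pos_of_lt h0 hjN hfg with ⟨rfl, rfl⟩ | ⟨rfl, hsum⟩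
  · exact ⟨q', hq', rfl, hqq⟩
  · exact ⟨N - q', Nat.sub_le _ _, pt_symm g q' hq', by omega⟩

def EndShape (n : ℕ) (x z : (LambdaR N G).V) : Prop :=
  (x = z ∧ n % 2 = 0) ∨
  ∃ (e f : G.Dart) (i j : ℕ) (hi : i ≤ N) (hj : j ≤ N), x = pt e i hi ∧ z = pt f j hj ∧
    (i + j + n) % 2 = 0 ∧ ((e = f ∧ i ≤ j + n ∧ j ≤ i + n) ∨ (e.1.1 = f.1.1 ∧ i + j ≤ n))

theorem EndShape.step {n : ℕ} (hn : n < N) {x z z' : (LambdaR N G).V} (h : EndShape n x z)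
    (hz : (LambdaR N G).Adj z z') : EndShape (n + 1) x z' := by
  have hN : 0 < N := by omega
  rcases h with ⟨rfl, hpar⟩ | ⟨e, f, i, j, hi, hj, rfl, rfl, hpar, hclose⟩
  · obtain ⟨g, q, q', hq, hq', rfl, rfl, hqq⟩ := exists_pt_of_adj hz
    exact Or.inr ⟨g, g, q, q', hq, hq', rfl, rfl, by omega, Or.inl ⟨rfl, by omega, by omega⟩⟩
  rcases Nat.eq_zero_or_pos j with rfl | hj0
  · rw [pt_zero] at hz
    obtain ⟨g, hg, rfl⟩ := exists_eq_pt_one_of_adj_vert hN hz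
    refine Or.inr ⟨e, g, i, 1, hi, hN, rfl, rfl, by omega, Or.inr ?_⟩
    rcases hclose with ⟨rfl, hi', -⟩ | ⟨hef, hi'⟩
    · exact ⟨hg.symm, by omega⟩
    · exact ⟨hef.trans hg.symm, by omega⟩
  rcases hj.eq_or_lt with hjN | hjN
  · rw [pt_congr f hj le_rfl hjN, pt_last] at hz
    obtain ⟨g, hg, rfl⟩ := exists_eq_pt_one_of_adj_vert hN hz
    rcases hclose with ⟨rfl, -, hi'⟩ | ⟨-, hi'⟩
    · exact Or.inr ⟨e.symm, g, N - i, 1, Nat.sub_le _ _, hN, pt_symm e i hi, rfl, by omega,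
        Or.inr ⟨hg.symm, by omega⟩⟩
    · omega
  · obtain ⟨j', hj', rfl, hjj⟩ := exists_eq_pt_of_adj_pt hj0 hjN hz
    refine Or.inr ⟨e, f, i, j', hi, hj', rfl, rfl, by omega, ?_⟩
    rcases hclose with ⟨rfl, hij, hji⟩ | ⟨hef, hij⟩
    · exact Or.inl ⟨rfl, by omega, by omega⟩
    · exact Or.inr ⟨hef, by omega⟩

theorem endShape_of_hasWalk {n : ℕ} (hn : n ≤ N) {x z : (LambdaR N G).V}
    (h : HasWalk (LambdaR N G) n x z) : EndShape n x z := by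
  induction n generalizing z with
  | zero => exact Or.inl ⟨HasWalk.zero_iff.1 h, rfl⟩
  | succ n ih =>
    obtain ⟨y, hxy, hyz⟩ := HasWalk.succ_iff.1 h
    exact (ih (by omega) hxy).step (by omega) hyz

theorem adj_pt_zero_pt_one {N : ℕ} {e f : G.Dart} (hef : e.1.1 = f.1.1) (hN : 1 ≤ N) :
    (LambdaR N G).Adj (pt e 0 (Nat.zero_le N)) (pt f 1 hN) := by
  rw [pt_zero, hef, ← pt_zero]
  exact adj_pt f _ _ (Or.inl rfl)

def contractMap (b : ℕ) {c : ℕ} (hc : Odd c) : (LambdaR (c * b) G).V → (LambdaR b G).V :=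
  Quot.lift
    (fun
      | Sum.inl u => vert u
      | Sum.inr (e, i) => pt e (contractPos c i) (contractPos_le hc.pos (Nat.le_of_lt_succ i.2)))
    (by
      rintro _ _ (⟨u, v, h⟩ | ⟨u, v, h, i⟩)
      · exact (pt_zero (⟨(u, v), h⟩ : G.Dart)).symm.trans (pt_congr _ _ _ (by simp [contractPos]))
      · exact (pt_symm _ _ _).trans
          (pt_congr _ _ _ (contractPos_sub hc (Nat.le_of_lt_succ i.2)).symm))

theorem adj_contractMap_of_hasWalk {b c : ℕ} (hb : 0 < b) (hc : Odd c)
    {x y : (LambdaR (c * b) G).V} (h : HasWalk (LambdaR (c * b) G) c x y) :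
    (LambdaR b G).Adj (contractMap b hc x) (contractMap b hc y) := by
  have hc2 := Nat.odd_iff.1 hc
  rcases endShape_of_hasWalk (Nat.le_mul_of_pos_right c hb) h with ⟨-, hpar⟩ |
    ⟨e, f, i, j, hi, hj, rfl, rfl, hpar, ⟨rfl, hij, hji⟩ | ⟨hef, hij⟩⟩
  · omega
  · exact adj_pt e (contractPos_le hc.pos hi) (contractPos_le hc.pos hj)
      (contractPos_adj hc hij hji hpar)
  · have hx : contractMap b hc (pt e i hi) = pt e (i % 2) (by omega) :=
      pt_congr _ (contractPos_le hc.pos hi) _ (contractPos_of_le (i := i) hc (by omega))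
    have hy : contractMap b hc (pt f j hj) = pt f (j % 2) (by omega) :=
      pt_congr _ (contractPos_le hc.pos hj) _ (contractPos_of_le (i := j) hc (by omega))
    rw [hx, hy]
    rcases (by omega : i % 2 = 0 ∧ j % 2 = 1 ∨ i % 2 = 1 ∧ j % 2 = 0) with ⟨hi2, hj2⟩ | ⟨hi2, hj2⟩
    · rw [pt_congr e _ (Nat.zero_le b) hi2, pt_congr f _ hb hj2]
      exact adj_pt_zero_pt_one hef hb
    · rw [pt_congr e _ hb hi2, pt_congr f _ (Nat.zero_le b) hj2]
      exact (LambdaR b G).symm (adj_pt_zero_pt_one hef.symm hb)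

def contract (b : ℕ) (hb : 0 < b) {c N : ℕ} (hc : Odd c) (hN : N = c * b) (G : SymGraph) :
    (GammaM c (LambdaR N G)).Adj →r (LambdaR b G).Adj := by
  subst hN
  exact ⟨contractMap b hc, adj_contractMap_of_hasWalk hb hc⟩

def expand (b c : ℕ) (G : SymGraph) : (LambdaR b G).Adj →r (GammaM c (LambdaR (c * b) G)).Adj where
  toFun := Quot.lift
    (fun
      | Sum.inl u => vert u
      | Sum.inr (e, i) => pt e (c * i) (Nat.mul_le_mul_left c (Nat.le_of_lt_succ i.2)))
    (by
      rintro _ _ (⟨u, v, h⟩ | ⟨u, v, h, i⟩)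
      · exact (pt_zero (⟨(u, v), h⟩ : G.Dart)).symm.trans (pt_congr _ _ _ (mul_zero c).symm)
      · exact (pt_symm _ _ _).trans (pt_congr _ _ _ (Nat.mul_sub c b i).symm))
  map_rel' h := by
    obtain ⟨e, i, j, hi, hj, rfl, rfl, rfl | rfl⟩ := exists_pt_of_adj h
    · exact hasWalk_pt e _ _ (by ring)
    · exact (hasWalk_pt e _ _ (by ring)).symm

def collapseOne (G : SymGraph) : (LambdaR 1 G).Adj →r G.Adj where
  toFun := Quot.lift
    (fun
      | Sum.inl u => u
      | Sum.inr (e, i) => if i.val = 0 then e.1.1 else e.1.2)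
    (by
      rintro _ _ (⟨u, v, h⟩ | ⟨u, v, h, i⟩)
      · simp
      · have := i.2
        by_cases hi : i.val = 0 <;> simp [hi]; omega)
  map_rel' h := by
    obtain ⟨e, i, j, hi, hj, rfl, rfl, rfl | rfl⟩ := exists_pt_of_adj h
    · obtain rfl : i = 0 := by omega
      exact e.2
    · obtain rfl : j = 0 := by omega
      exact G.symm e.2

def collapse {c : ℕ} (hc : Odd c) (G : SymGraph) : (GammaM c (LambdaR c G)).Adj →r G.Adj :=
  (collapseOne G).comp (contract 1 one_pos hc (mul_one c).symm G)

end LambdaR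

namespace OmegaM

variable {A H : SymGraph} {k m : ℕ}

theorem mem_extT_of_hasWalk {p q : (OmegaM k H).V} {j : ℕ} (hj : j ≤ k)
    (h : HasWalk (OmegaM k H) j p q) : p.1.1 ∈ extT H q.1.1 q.1.2 ⟨j, Nat.lt_succ_of_le hj⟩ := by
  induction j generalizing q with
  | zero => rw [HasWalk.zero_iff.1 h]; rfl
  | succ j ih =>
    obtain ⟨z, hpz, hzq⟩ := HasWalk.succ_iff.1 h
    exact (hzq.1 ⟨j, hj⟩).1 (ih (by omega) hpz)

def counit (hm : m = 2 * k + 1) (H : SymGraph) : (GammaM m (OmegaM k H)).Adj →r H.Adj where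
  toFun p := p.1.1
  map_rel' {p q} h := by
    obtain ⟨x, hpx, hxq⟩ := HasWalk.exists_split (m := k) (n := 1 + k)
      (by rwa [show k + (1 + k) = m by omega])
    obtain ⟨y, hxy, hyq⟩ := HasWalk.exists_split hxq
    exact hxy.adj.2 _ (mem_extT_of_hasWalk le_rfl hpx) _ (mem_extT_of_hasWalk le_rfl hyq.symm)

theorem extT_image (F : A.V → H.V) (a : A.V) (j : Fin (k + 1)) :
    extT H (F a) (fun i : Fin k => F '' {x | HasWalk A ((i : ℕ) + 1) a x}) j =
      F '' {x | HasWalk A j a x} := by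
  cases j using Fin.cases with
  | zero => simp [extT, HasWalk.zero_iff]
  | succ i => rfl

def transpose (hm : m = 2 * k + 1) (f : A.V → H.V)
    (hf : ∀ {x y : A.V}, HasWalk A m x y → H.Adj (f x) (f y)) : A.Adj →r (OmegaM k H).Adj where
  toFun a := ⟨(f a, fun i => f '' {x | HasWalk A ((i : ℕ) + 1) a x}), fun i => by
    dsimp only
    rw [extT_image, extT_image]
    rintro _ ⟨x, hx, rfl⟩ _ ⟨y, hy, rfl⟩
    rw [Set.mem_ofPred_eq, Fin.val_castSucc] at hx
    rw [Set.mem_ofPred_eq, Fin.val_succ] at hy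
    exact hf ((hx.symm.append hy).of_le (by omega) (by omega) (by omega))⟩
  map_rel' {a b} hab := by
    refine ⟨fun i => ⟨?_, ?_⟩, ?_⟩ <;> dsimp only <;> rw [extT_image, extT_image]
    · rintro _ ⟨x, hx, rfl⟩
      rw [Set.mem_ofPred_eq, Fin.val_castSucc] at hx
      refine ⟨x, ?_, rfl⟩
      rw [Set.mem_ofPred_eq, Fin.val_succ, add_comm]
      exact (HasWalk.of_adj (A.symm hab)).append hx
    · rintro _ ⟨x, hx, rfl⟩
      rw [Set.mem_ofPred_eq, Fin.val_castSucc] at hx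
      refine ⟨x, ?_, rfl⟩
      rw [Set.mem_ofPred_eq, Fin.val_succ, add_comm]
      exact (HasWalk.of_adj hab).append hx
    · rintro _ ⟨x, hx, rfl⟩ _ ⟨y, hy, rfl⟩
      rw [Set.mem_ofPred_eq, Fin.val_last] at hx hy
      have hxy := (hx.symm.append (HasWalk.of_adj hab)).append hy
      rw [show k + 1 + k = m by omega] at hxy
      exact hf hxy

def toGammaOmega {k' s K : ℕ} (hK : (2 * k' + 1) * s = 2 * K + 1) (H : SymGraph) :
    (OmegaM k' H).Adj →r (GammaM s (OmegaM K H)).Adj :=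
  have hs : Odd s := Nat.Odd.of_mul_right (hK ▸ odd_two_mul_add_one K)
  let F := (counit rfl H).comp (GammaM.divHom (2 * k' + 1) (LambdaR.collapse hs (OmegaM k' H)))
  (GammaM.map (transpose (A := LambdaR s (OmegaM k' H)) hK F F.map_rel)).comp
    (LambdaR.unit s (OmegaM k' H))

def gammaToOmega {k s' K : ℕ} (hK : (2 * k + 1) * s' = 2 * K + 1) (H : SymGraph) :
    (GammaM s' (OmegaM K H)).Adj →r (OmegaM k H).Adj :=
  let F := (counit hK H).comp (GammaM.mulHom (2 * k + 1) (RelHom.id _))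
  transpose (A := GammaM s' (OmegaM K H)) rfl F F.map_rel

end OmegaM

def PF.homOfLE {s r s' r' : ℕ} (hs : Odd s) (hs' : Odd s') (hr : Odd r) (hr' : Odd r')
    (hle : s * r' ≤ s' * r) (G : SymGraph) : (PF s r G).Adj →r (PF s' r' G).Adj :=
  have hpar : s * r' % 2 = s' * r % 2 := by
    rw [Nat.odd_iff.1 (hs.mul hr'), Nat.odd_iff.1 (hs'.mul hr)]
  (GammaM.divHom s' (LambdaR.contract r' hr'.pos hr (mul_comm r' r) G)).comp
    ((GammaM.ofLE (hs.mul hr').pos hle hpar).comp (GammaM.mulHom s (LambdaR.expand r r' G)))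

def RF.homOfLE {r r' k k' : ℕ} (hr : Odd r) (hr' : Odd r')
    (hle : (2 * k + 1) * r' ≤ (2 * k' + 1) * r) (G : SymGraph) :
    (RF r' k' G).Adj →r (RF r k G).Adj :=
  have hodd : Odd (r' * (2 * k + 1)) := hr'.mul (odd_two_mul_add_one k)
  have hpar : r' * (2 * k + 1) % 2 = r * (2 * k' + 1) % 2 := by
    rw [Nat.odd_iff.1 hodd, Nat.odd_iff.1 (hr.mul (odd_two_mul_add_one k'))]
  (GammaM.divHom r (OmegaM.gammaToOmega (K := 2 * k * k' + k + k') (by ring) G)).comp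
    ((GammaM.ofLE hodd.pos (by rw [mul_comm r', mul_comm r]; exact hle) hpar).comp
      (GammaM.mulHom r' (OmegaM.toGammaOmega (K := 2 * k * k' + k + k') (by ring) G)))

/-- For odd positive integers `s = 2k+1`, `r`, `s' = 2k'+1`, `r'` with `s/r ≤ s'/r'`,
every graph `G` admits a homomorphism `P^s_r(G) → P^{s'}_{r'}(G)` and a homomorphism
`R^{r'}_{s'}(G) → R^r_s(G)`. -/
theorem powers_ordered (s r s' r' k k' : ℕ) (hs : s = 2 * k + 1) (hs' : s' = 2 * k' + 1)
    (hr : Odd r) (hr' : Odd r') (hle : s * r' ≤ s' * r) (G : SymGraph) :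
    Nonempty ((PF s r G).Adj →r (PF s' r' G).Adj) ∧
    Nonempty ((RF r' k' G).Adj →r (RF r k G).Adj) := by
  subst hs hs'
  exact ⟨⟨PF.homOfLE (odd_two_mul_add_one k) (odd_two_mul_add_one k') hr hr' hle G⟩,
    ⟨RF.homOfLE hr hr' hle G⟩⟩
end
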